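/- arXiv:1110.1462 — 2 statements merged into one kernel-verified Lean document; each statement's English description precedes it below -/
import Mathlib

section
/- Let f₁, …, f_m : ℝ → ℝ be square-integrable on (0,1) with means μ_i = ∫₀¹ f_i and centered versions f_i^c = f_i − μ_i, and let λ₁ > 0 and λ₂ > 0 be fixed weights for the mean and dispersion components. Let g(t) = (1/m) Σ_{i=1}^m f_i(t), with mean μ_g and centered version g^c = g − μ_g. Then for every square-integrable h on (0,1) with mean μ_h and centered version h^c, Σ_{i=1}^m [ λ₁ (μ_i − μ_g)² + λ₂ ∫₀¹ (f_i^c(t) − g^c(t))² dt ] ≤ Σ_{i=1}^m [ λ₁ (μ_i − μ_h)² + λ₂ ∫₀¹ (f_i^c(t) − h^c(t))² dt ]; that is, the pointwise-mean barycenter also minimizes the two-component adaptive Wasserstein criterion for any positive component weights. -/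
open MeasureTheory Finset

/-!
Both components of the criterion are sums of squared deviations: of the means `μᵢ` from a
number, and, pointwise in `t`, of the centered values `fᵢᶜ(t)` from a number. For real numbers
`aᵢ` one has `∑ (aᵢ - c)² = ∑ (aᵢ - ā)² + m (ā - c)²`, so the average `ā` minimizes such a sum.
Integration is linear, so `μ_g` is the average of the `μᵢ` and `gᶜ` is the pointwise average of
the `fᵢᶜ`; hence each component is separately minimized by `g`, and so is any nonnegative
combination of the two.
-/

section FinsetMean

variable {ι : Type*} (s : Finset ι) (a : ι → ℝ)

theorem sum_sq_sub_eq_sum_sq_sub_mean_add (c : ℝ) :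
    ∑ i ∈ s, (a i - c) ^ 2 =
      ∑ i ∈ s, (a i - (1 / (#s : ℝ)) * ∑ j ∈ s, a j) ^ 2 +
        #s * ((1 / (#s : ℝ)) * ∑ j ∈ s, a j - c) ^ 2 := by
  rcases s.eq_empty_or_nonempty with rfl | hs
  · simp
  set mean := (1 / (#s : ℝ)) * ∑ j ∈ s, a j
  have hcard : (#s : ℝ) ≠ 0 := by simpa using hs.ne_empty
  have hdev : ∑ i ∈ s, (a i - mean) = 0 := by
    rw [sum_sub_distrib, sum_const, nsmul_eq_mul, ← mul_assoc, mul_one_div_cancel hcard,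
      one_mul, sub_self]
  calc ∑ i ∈ s, (a i - c) ^ 2
      = ∑ i ∈ s, ((a i - mean) ^ 2 + 2 * (mean - c) * (a i - mean) + (mean - c) ^ 2) :=
        sum_congr rfl fun _ _ => by ring
    _ = ∑ i ∈ s, (a i - mean) ^ 2 + #s * (mean - c) ^ 2 := by
        rw [sum_add_distrib, sum_add_distrib, ← mul_sum, hdev, sum_const, nsmul_eq_mul]
        ring

theorem sum_sq_sub_mean_le (c : ℝ) :
    ∑ i ∈ s, (a i - (1 / (#s : ℝ)) * ∑ j ∈ s, a j) ^ 2 ≤ ∑ i ∈ s, (a i - c) ^ 2 := by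
  rw [sum_sq_sub_eq_sum_sq_sub_mean_add s a c]
  exact le_add_of_nonneg_right (by positivity)

end FinsetMean

namespace MeasureTheory

variable {α ι : Type*} [MeasurableSpace α] {μ : Measure α} (s : Finset ι) {F : ι → α → ℝ}

noncomputable def centered (μ : Measure α) (f : α → ℝ) (t : α) : ℝ :=
  f t - ∫ x, f x ∂μ

theorem MemLp.centered [IsFiniteMeasure μ] {p : ENNReal} {f : α → ℝ} (hf : MemLp f p μ) :
    MemLp (centered μ f) p μ :=
  hf.sub (memLp_const _)

theorem integral_finset_mean (hF : ∀ i ∈ s, Integrable (F i) μ) :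
    ∫ t, (1 / (#s : ℝ)) * ∑ i ∈ s, F i t ∂μ = (1 / (#s : ℝ)) * ∑ i ∈ s, ∫ t, F i t ∂μ := by
  rw [integral_const_mul, integral_finsetSum s hF]

theorem centered_finset_mean (hF : ∀ i ∈ s, Integrable (F i) μ) (t : α) :
    centered μ (fun t => (1 / (#s : ℝ)) * ∑ i ∈ s, F i t) t =
      (1 / (#s : ℝ)) * ∑ i ∈ s, centered μ (F i) t := by
  rw [centered, integral_finset_mean s hF, ← mul_sub, ← sum_sub_distrib]
  rfl

theorem sum_integral_sq_sub_mean_le {H : α → ℝ} (hF : ∀ i ∈ s, MemLp (F i) 2 μ)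
    (hH : MemLp H 2 μ) :
    ∑ i ∈ s, ∫ t, (F i t - (1 / (#s : ℝ)) * ∑ j ∈ s, F j t) ^ 2 ∂μ ≤
      ∑ i ∈ s, ∫ t, (F i t - H t) ^ 2 ∂μ := by
  have hmean : MemLp (fun t => (1 / (#s : ℝ)) * ∑ j ∈ s, F j t) 2 μ :=
    (memLp_finsetSum s hF).const_mul _
  have hL : ∀ i ∈ s, Integrable (fun t => (F i t - (1 / (#s : ℝ)) * ∑ j ∈ s, F j t) ^ 2) μ :=
    fun i hi => ((hF i hi).sub hmean).integrable_sq
  have hR : ∀ i ∈ s, Integrable (fun t => (F i t - H t) ^ 2) μ :=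
    fun i hi => ((hF i hi).sub hH).integrable_sq
  rw [← integral_finsetSum s hL, ← integral_finsetSum s hR]
  exact integral_mono (integrable_finsetSum s hL) (integrable_finsetSum s hR)
    fun t => sum_sq_sub_mean_le s (F · t) (H t)

end MeasureTheory

/-- The pointwise-mean barycenter also minimizes the two-component adaptive
Wasserstein criterion `Σᵢ [λ₁ (μᵢ − μ_g)² + λ₂ ∫ (fᵢᶜ − gᶜ)²]` for any fixed
positive component weights `λ₁, λ₂`. -/
theorem barycenter_minimizes_adaptive_criterion
    (m : ℕ) (f : Fin m → ℝ → ℝ)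
    (hf : ∀ i, MemLp (f i) 2 (volume.restrict (Set.Ioo (0:ℝ) 1)))
    (lam₁ lam₂ : ℝ) (hlam₁ : 0 < lam₁) (hlam₂ : 0 < lam₂)
    (g : ℝ → ℝ) (hgdef : ∀ t, g t = (1 / (m : ℝ)) * ∑ i : Fin m, f i t)
    (h : ℝ → ℝ) (hh : MemLp h 2 (volume.restrict (Set.Ioo (0:ℝ) 1))) :
    (∑ i : Fin m,
        (lam₁ * ((∫ t in Set.Ioo (0:ℝ) 1, f i t) -
            ∫ t in Set.Ioo (0:ℝ) 1, g t) ^ 2 +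
          lam₂ * ∫ t in Set.Ioo (0:ℝ) 1,
            ((f i t - ∫ s in Set.Ioo (0:ℝ) 1, f i s) -
              (g t - ∫ s in Set.Ioo (0:ℝ) 1, g s)) ^ 2)) ≤
      ∑ i : Fin m,
        (lam₁ * ((∫ t in Set.Ioo (0:ℝ) 1, f i t) -
            ∫ t in Set.Ioo (0:ℝ) 1, h t) ^ 2 +
          lam₂ * ∫ t in Set.Ioo (0:ℝ) 1,
            ((f i t - ∫ s in Set.Ioo (0:ℝ) 1, f i s) -
              (h t - ∫ s in Set.Ioo (0:ℝ) 1, h s)) ^ 2) := by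
  have hg : g = fun t => (1 / (#(univ : Finset (Fin m)) : ℝ)) * ∑ i, f i t := by
    rw [card_fin]; exact funext hgdef
  have hf_int i (_ : i ∈ univ) := (hf i).integrable one_le_two
  have hmean := sum_sq_sub_mean_le univ (fun i => ∫ t in Set.Ioo (0:ℝ) 1, f i t)
    (∫ t in Set.Ioo (0:ℝ) 1, h t)
  rw [← integral_finset_mean univ hf_int, ← hg] at hmean
  have hdisp := sum_integral_sq_sub_mean_le univ (fun i _ => (hf i).centered) hh.centered
  simp only [← centered_finset_mean univ hf_int, ← hg] at hdisp
  simp only [sum_add_distrib, ← mul_sum]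
  exact add_le_add (mul_le_mul_of_nonneg_left hmean hlam₁.le)
    (mul_le_mul_of_nonneg_left hdisp hlam₂.le)
end

section
/- Let K ≥ 1 and p ≥ 1, and for each cluster k = 1, …, K and variable j = 1, …, p let S_{k,j} > 0. Define λ*_{k,j} = (∏_{h=1}^p S_{k,h})^{1/p} / S_{k,j}. Then for every family (λ_{k,j}) with λ_{k,j} > 0 and ∏_{j=1}^p λ_{k,j} = 1 for each k, one has Σ_{k=1}^K Σ_{j=1}^p λ*_{k,j} S_{k,j} ≤ Σ_{k=1}^K Σ_{j=1}^p λ_{k,j} S_{k,j}, and λ* satisfies the constraints λ*_{k,j} > 0, ∏_{j=1}^p λ*_{k,j} = 1 for each k; moreover Σ_{k,j} λ*_{k,j} S_{k,j} = Σ_{k=1}^K p (∏_{h=1}^p S_{k,h})^{1/p}. -/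
open Finset

/-- In the weighting step of CDC-AWD, the cluster-dependent weights
`λ*_{k,j} = (∏ₕ S_{k,h})^(1/p) / S_{k,j}` are positive, have product one in
each cluster, minimize `Σ_k Σ_j λ_{k,j} S_{k,j}` among all families of
positive weights with product one in each cluster, and give
`Σ_{k,j} λ*_{k,j} S_{k,j} = Σ_k p (∏ₕ S_{k,h})^(1/p)`. -/
theorem optimal_cluster_dependent_weights
    (K p : ℕ) (hK : 1 ≤ K) (hp : 1 ≤ p)
    (S : Fin K → Fin p → ℝ) (hS : ∀ k j, 0 < S k j) :
    (∀ lam : Fin K → Fin p → ℝ,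
        (∀ k j, 0 < lam k j) → (∀ k, (∏ j : Fin p, lam k j) = 1) →
        (∑ k : Fin K, ∑ j : Fin p,
            ((∏ h : Fin p, S k h) ^ ((1 : ℝ) / p) / S k j) * S k j) ≤
          ∑ k : Fin K, ∑ j : Fin p, lam k j * S k j) ∧
      (∀ k j, 0 < (∏ h : Fin p, S k h) ^ ((1 : ℝ) / p) / S k j) ∧
      (∀ k, (∏ j : Fin p, (∏ h : Fin p, S k h) ^ ((1 : ℝ) / p) / S k j) = 1) ∧
      (∑ k : Fin K, ∑ j : Fin p,
          ((∏ h : Fin p, S k h) ^ ((1 : ℝ) / p) / S k j) * S k j) =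
        ∑ k : Fin K, (p : ℝ) * (∏ h : Fin p, S k h) ^ ((1 : ℝ) / p) := by
  have hp0 : (0:ℝ) < p := by exact_mod_cast hp
  have hG : ∀ k, 0 < ∏ h : Fin p, S k h := fun k => prod_pos fun h _ => hS k h
  have hterm : ∀ k j, ((∏ h : Fin p, S k h) ^ ((1 : ℝ) / p) / S k j) * S k j
      = (∏ h : Fin p, S k h) ^ ((1 : ℝ) / p) := by
    intro k j
    rw [div_mul_cancel₀ _ (ne_of_gt (hS k j))]
  have hsum : (∑ k : Fin K, ∑ j : Fin p,
      ((∏ h : Fin p, S k h) ^ ((1 : ℝ) / p) / S k j) * S k j) =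
      ∑ k : Fin K, (p : ℝ) * (∏ h : Fin p, S k h) ^ ((1 : ℝ) / p) := by
    refine Finset.sum_congr rfl fun k _ => ?_
    calc ∑ j : Fin p, (∏ h : Fin p, S k h) ^ ((1:ℝ)/p) / S k j * S k j
        = ∑ _j : Fin p, (∏ h : Fin p, S k h) ^ ((1:ℝ)/p) :=
          Finset.sum_congr rfl fun j _ => hterm k j
      _ = (p:ℝ) * (∏ h : Fin p, S k h) ^ ((1:ℝ)/p) := by
          rw [Finset.sum_const, Finset.card_univ, Fintype.card_fin, nsmul_eq_mul]
  refine ⟨?_, ?_, ?_, hsum⟩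
  · intro lam hlam hprod
    rw [hsum]
    refine Finset.sum_le_sum fun k _ => ?_
    have amgm := Real.geom_mean_le_arith_mean_weighted Finset.univ
      (fun _ : Fin p => (1:ℝ)/p) (fun j => lam k j * S k j)
      (fun i _ => by positivity)
      (by simp [Finset.card_univ]; field_simp)
      (fun i _ => le_of_lt (mul_pos (hlam k i) (hS k i)))
    have hprodeq : ∏ j : Fin p, (lam k j * S k j) ^ ((1:ℝ)/p)
        = (∏ h : Fin p, S k h) ^ ((1:ℝ)/p) := by
      rw [Real.finset_prod_rpow _ _ (fun j _ => le_of_lt (mul_pos (hlam k j) (hS k j)))]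
      rw [Finset.prod_mul_distrib, hprod k, one_mul]
    rw [hprodeq] at amgm
    calc (p:ℝ) * (∏ h : Fin p, S k h) ^ ((1:ℝ)/p)
        ≤ (p:ℝ) * ∑ j : Fin p, (1:ℝ)/p * (lam k j * S k j) := by
          exact mul_le_mul_of_nonneg_left amgm (le_of_lt hp0)
      _ = ∑ j : Fin p, lam k j * S k j := by
          rw [Finset.mul_sum]
          refine Finset.sum_congr rfl fun j _ => ?_
          field_simp
  · intro k j
    exact div_pos (Real.rpow_pos_of_pos (hG k) _) (hS k j)
  · intro k
    rw [Finset.prod_div_distrib, Finset.prod_const, Finset.card_univ, Fintype.card_fin,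
      ← Real.rpow_natCast ((∏ h : Fin p, S k h) ^ ((1:ℝ)/p)) p, ← Real.rpow_mul (le_of_lt (hG k))]
    rw [one_div, inv_mul_cancel₀ (ne_of_gt hp0), Real.rpow_one]
    exact div_self (ne_of_gt (hG k))
end
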